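/- arXiv:1011.1724 — 2 statements merged into one kernel-verified Lean document; each statement's English description precedes it below -/
import Mathlib

section
/- Let γ ≠ 0 be real, δ > 0, and (σ_N) a sequence of reals with σ_N > −1, σ_N ≠ 0, and N·σ_N → γ as N → ∞. Let i_N be integers with 1 ≤ i_N ≤ N and i_N/N → x for some x ∈ [0,1]. Then lim_{N→∞} N² · Σ_{j=0}^{N} q_{N,σ_N}(i_N, j) · |j/N − i_N/N|^{2+δ} = 0. If i_N = min{⌊Nx⌋+1, N}, the convergence is uniform in x for 0 ≤ x ≤ 1. -/
open Filter

/-- The Moran transition function `p_{N,σ}` on `{0,1,…,N}` (zero off `{0,…,N}²` except as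
specified): `p(0,0) = p(N,N) = 1`, boundary states are absorbing, and for `0 < i < N`:
`p(i,i+1) = (1+σ)(i/N)(1−i/N)/(1+σ i/N)`, `p(i,i−1) = (i/N)(1−i/N)/(1+σ i/N)`,
`p(i,i) = 1 − p(i,i+1) − p(i,i−1)`. -/
noncomputable def moranP (N : ℕ) (σ : ℝ) (i j : ℕ) : ℝ :=
  if i = 0 ∨ i = N then (if j = i then 1 else 0)
  else if j = i + 1 then
    (1 + σ) * ((i : ℝ) / N) * (1 - (i : ℝ) / N) / (1 + σ * ((i : ℝ) / N))
  else if j + 1 = i then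
    ((i : ℝ) / N) * (1 - (i : ℝ) / N) / (1 + σ * ((i : ℝ) / N))
  else if j = i then
    1 - (1 + σ) * ((i : ℝ) / N) * (1 - (i : ℝ) / N) / (1 + σ * ((i : ℝ) / N))
      - ((i : ℝ) / N) * (1 - (i : ℝ) / N) / (1 + σ * ((i : ℝ) / N))
  else 0

/-- `h_{N,σ}(i) = (1 − (1+σ)^{−i})/(1 − (1+σ)^{−N})`, the probability that the Moran chain
started at `i` is absorbed at `N` before `0`. -/
noncomputable def moranH (N : ℕ) (σ : ℝ) (i : ℕ) : ℝ :=
  (1 - (1 + σ) ^ (-(i : ℤ))) / (1 - (1 + σ) ^ (-(N : ℤ)))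

/-- The dual (conditioned on fixation) transition function
`q_{N,σ}(i,j) = p_{N,σ}(i,j)·h_{N,σ}(j)/h_{N,σ}(i)`, with `q_{N,σ}(i,0) = 0`. -/
noncomputable def moranQ (N : ℕ) (σ : ℝ) (i j : ℕ) : ℝ :=
  if j = 0 then 0 else moranP N σ i j * moranH N σ j / moranH N σ i

/-!
The dual kernel `q` is a Markov kernel on `{1, …, N}`: `h` is `p`-harmonic (the up-rate is
`1 + σ` times the down-rate, while the increments of `h` shrink by the factor `(1 + σ)⁻¹`) and
`h 0 = 0`. Since `q` only jumps to nearest neighbours, the `(2 + δ)`-th moment of the increment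
is at most `N^{-(2+δ)}`, so the scaled moment is at most `N^{-δ}`, uniformly in the starting state.
-/

open Finset

noncomputable def moranDownProb (N : ℕ) (σ : ℝ) (i : ℕ) : ℝ :=
  ((i : ℝ) / N) * (1 - (i : ℝ) / N) / (1 + σ * ((i : ℝ) / N))

section Kernel

variable {N : ℕ} {σ : ℝ} {i : ℕ}

lemma moranP_of_eq_zero_or_eq (h : i = 0 ∨ i = N) (j : ℕ) :
    moranP N σ i j = if j = i then 1 else 0 := by
  rw [moranP, if_pos h]

lemma moranP_of_pos_of_lt (h0 : 0 < i) (hN : i < N) (j : ℕ) :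
    moranP N σ i j = (if j = i + 1 then (1 + σ) * moranDownProb N σ i else 0)
      + (if j = i - 1 then moranDownProb N σ i else 0)
      + (if j = i then 1 - (2 + σ) * moranDownProb N σ i else 0) := by
  unfold moranP moranDownProb
  rw [if_neg (by omega)]
  split_ifs <;> first | omega | ring

lemma moranP_eq_zero_of_not_adj {j : ℕ} (h : ¬(j + 1 = i ∨ j = i ∨ j = i + 1)) :
    moranP N σ i j = 0 := by
  unfold moranP
  split_ifs <;> first | rfl | omega

lemma one_add_mul_pos {x : ℝ} (hσ : -1 < σ) (hx0 : 0 ≤ x) (hx1 : x ≤ 1) : 0 < 1 + σ * x := by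
  rcases le_total σ 0 with h | h <;> nlinarith

lemma moranDownProb_nonneg (hσ : -1 < σ) (hiN : i ≤ N) : 0 ≤ moranDownProb N σ i := by
  have hx0 : (0 : ℝ) ≤ i / N := by positivity
  have hx1 : (i : ℝ) / N ≤ 1 := div_le_one_of_le₀ (by exact_mod_cast hiN) (Nat.cast_nonneg _)
  exact div_nonneg (mul_nonneg hx0 (sub_nonneg.2 hx1)) (one_add_mul_pos hσ hx0 hx1).le

lemma two_add_mul_moranDownProb_le_one (hσ : -1 < σ) (hiN : i ≤ N) :
    (2 + σ) * moranDownProb N σ i ≤ 1 := by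
  set x : ℝ := i / N
  have hx0 : 0 ≤ x := by positivity
  have hx1 : x ≤ 1 := div_le_one_of_le₀ (by exact_mod_cast hiN) (Nat.cast_nonneg _)
  rw [moranDownProb, mul_div_assoc', div_le_one (one_add_mul_pos hσ hx0 hx1)]
  -- `1 + σ x - (2 + σ) x (1 - x) = (1 - x)² + (1 + σ) x²`
  nlinarith [sq_nonneg (1 - x), mul_nonneg (by linarith : 0 ≤ 1 + σ) (sq_nonneg x)]

lemma moranP_nonneg (hσ : -1 < σ) (hiN : i ≤ N) (j : ℕ) : 0 ≤ moranP N σ i j := by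
  by_cases hb : i = 0 ∨ i = N
  · rw [moranP_of_eq_zero_or_eq hb]
    split_ifs <;> norm_num
  · have hd := moranDownProb_nonneg hσ hiN
    have hd' := two_add_mul_moranDownProb_le_one hσ hiN
    rw [moranP_of_pos_of_lt (by omega) (by omega)]
    refine add_nonneg (add_nonneg ?_ ?_) ?_ <;> split_ifs <;> nlinarith

lemma moranH_zero : moranH N σ 0 = 0 := by
  simp [moranH]

lemma moranH_eq_pow (k : ℕ) :
    moranH N σ k = (1 - (1 + σ)⁻¹ ^ k) / (1 - (1 + σ)⁻¹ ^ N) := by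
  simp only [moranH, zpow_neg, zpow_natCast, inv_pow]

lemma moranH_pos (hσ : -1 < σ) (hσ0 : σ ≠ 0) {k : ℕ} (hk : 1 ≤ k) (hN : 1 ≤ N) :
    0 < moranH N σ k := by
  rw [moranH_eq_pow]
  rcases lt_or_gt_of_ne hσ0 with hneg | hpos
  · have hr : 1 < (1 + σ)⁻¹ := (one_lt_inv₀ (by linarith)).2 (by linarith)
    exact div_pos_of_neg_of_neg (by linarith [one_lt_pow₀ hr (by omega : k ≠ 0)])
      (by linarith [one_lt_pow₀ hr (by omega : N ≠ 0)])
  · have hr0 : 0 ≤ (1 + σ)⁻¹ := by positivity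
    have hr : (1 + σ)⁻¹ < 1 := inv_lt_one_of_one_lt₀ (by linarith)
    exact div_pos (by linarith [pow_lt_one₀ hr0 hr (by omega : k ≠ 0)])
      (by linarith [pow_lt_one₀ hr0 hr (by omega : N ≠ 0)])

lemma moranH_nonneg (hσ : -1 < σ) (hσ0 : σ ≠ 0) (hN : 1 ≤ N) (k : ℕ) : 0 ≤ moranH N σ k := by
  rcases Nat.eq_zero_or_pos k with rfl | hk
  · exact moranH_zero.ge
  · exact (moranH_pos hσ hσ0 hk hN).le

lemma one_add_mul_moranH_sub (hσ : 1 + σ ≠ 0) (k : ℕ) :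
    (1 + σ) * (moranH N σ (k + 2) - moranH N σ (k + 1)) = moranH N σ (k + 1) - moranH N σ k := by
  simp only [moranH_eq_pow]
  rw [← sub_div, ← sub_div, mul_div_assoc']
  congr 1
  linear_combination ((1 + σ)⁻¹ ^ k - (1 + σ)⁻¹ ^ (k + 1)) * mul_inv_cancel₀ hσ

lemma sum_moranP_mul_moranH (hσ : 1 + σ ≠ 0) (hiN : i ≤ N) :
    ∑ j ∈ range (N + 1), moranP N σ i j * moranH N σ j = moranH N σ i := by
  by_cases hb : i = 0 ∨ i = N
  · simp only [moranP_of_eq_zero_or_eq hb, ite_mul, one_mul, zero_mul, sum_ite_eq', mem_range,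
      if_pos (Nat.lt_succ_of_le hiN)]
  · obtain ⟨k, rfl⟩ : ∃ k, i = k + 1 := ⟨i - 1, by omega⟩
    have h0 : 0 < k + 1 := by omega
    have hlt : k + 1 < N := by omega
    simp only [moranP_of_pos_of_lt h0 hlt, add_mul, ite_mul, zero_mul,
      sum_add_distrib, sum_ite_eq', mem_range]
    rw [if_pos (by omega), if_pos (by omega), if_pos (by omega), Nat.add_sub_cancel]
    linear_combination moranDownProb N σ (k + 1) * one_add_mul_moranH_sub hσ k

lemma moranQ_eq_div (j : ℕ) :
    moranQ N σ i j = moranP N σ i j * moranH N σ j / moranH N σ i := by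
  unfold moranQ
  split_ifs with hj
  · simp [hj, moranH_zero]
  · rfl

lemma sum_moranQ (hσ : -1 < σ) (hσ0 : σ ≠ 0) (hi : 1 ≤ i) (hiN : i ≤ N) :
    ∑ j ∈ range (N + 1), moranQ N σ i j = 1 := by
  simp only [moranQ_eq_div]
  rw [← sum_div, sum_moranP_mul_moranH (by linarith) hiN,
    div_self (moranH_pos hσ hσ0 hi (hi.trans hiN)).ne']

lemma moranQ_nonneg (hσ : -1 < σ) (hσ0 : σ ≠ 0) (hi : 1 ≤ i) (hiN : i ≤ N) (j : ℕ) :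
    0 ≤ moranQ N σ i j := by
  have hN := hi.trans hiN
  rw [moranQ_eq_div]
  exact div_nonneg (mul_nonneg (moranP_nonneg hσ hiN j) (moranH_nonneg hσ hσ0 hN j))
    (moranH_nonneg hσ hσ0 hN i)

end Kernel

lemma abs_div_sub_div_le_one_div {N i j : ℕ} (h : j + 1 = i ∨ j = i ∨ j = i + 1) :
    |(j : ℝ) / N - (i : ℝ) / N| ≤ 1 / N := by
  rw [← sub_div, abs_div, Nat.abs_cast]
  gcongr
  rcases h with rfl | rfl | rfl <;> norm_num

section Moment

variable {N : ℕ} {σ : ℝ} {i : ℕ}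

lemma moranQ_moment_nonneg (hσ : -1 < σ) (hσ0 : σ ≠ 0) (hi : 1 ≤ i) (hiN : i ≤ N) (s : ℝ) :
    0 ≤ ∑ j ∈ range (N + 1), moranQ N σ i j * |(j : ℝ) / N - (i : ℝ) / N| ^ s :=
  sum_nonneg fun j _ =>
    mul_nonneg (moranQ_nonneg hσ hσ0 hi hiN j) (Real.rpow_nonneg (abs_nonneg _) s)

lemma moranQ_moment_le (hσ : -1 < σ) (hσ0 : σ ≠ 0) (hi : 1 ≤ i) (hiN : i ≤ N) {s : ℝ}
    (hs : 0 ≤ s) :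
    ∑ j ∈ range (N + 1), moranQ N σ i j * |(j : ℝ) / N - (i : ℝ) / N| ^ s ≤ (1 / N) ^ s :=
  calc ∑ j ∈ range (N + 1), moranQ N σ i j * |(j : ℝ) / N - (i : ℝ) / N| ^ s
      ≤ ∑ j ∈ range (N + 1), moranQ N σ i j * (1 / N : ℝ) ^ s := by
        refine sum_le_sum fun j _ => ?_
        by_cases hadj : j + 1 = i ∨ j = i ∨ j = i + 1
        · exact mul_le_mul_of_nonneg_left
            (Real.rpow_le_rpow (abs_nonneg _) (abs_div_sub_div_le_one_div hadj) hs)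
            (moranQ_nonneg hσ hσ0 hi hiN j)
        · simp [moranQ_eq_div, moranP_eq_zero_of_not_adj hadj]
    _ = (1 / N) ^ s := by rw [← sum_mul, sum_moranQ hσ hσ0 hi hiN, one_mul]

lemma abs_scaled_moranQ_moment_le (hσ : -1 < σ) (hσ0 : σ ≠ 0) (hi : 1 ≤ i) (hiN : i ≤ N)
    {δ : ℝ} (hδ : 0 ≤ 2 + δ) :
    |(N : ℝ) ^ 2 * ∑ j ∈ range (N + 1), moranQ N σ i j * |(j : ℝ) / N - (i : ℝ) / N| ^ (2 + δ)|
      ≤ (N : ℝ) ^ (-δ) := by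
  have hN : (0 : ℝ) < N := by exact_mod_cast hi.trans hiN
  rw [abs_of_nonneg (mul_nonneg (by positivity) (moranQ_moment_nonneg hσ hσ0 hi hiN _))]
  calc (N : ℝ) ^ 2 * ∑ j ∈ range (N + 1), moranQ N σ i j * |(j : ℝ) / N - (i : ℝ) / N| ^ (2 + δ)
      ≤ (N : ℝ) ^ 2 * (1 / N) ^ (2 + δ) := by
        gcongr
        exact moranQ_moment_le hσ hσ0 hi hiN hδ
    _ = (N : ℝ) ^ (-δ) := by
        rw [one_div, Real.inv_rpow hN.le, ← Real.rpow_natCast, ← Real.rpow_neg hN.le,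
          ← Real.rpow_add hN]
        norm_num

end Moment

lemma tendstoUniformlyOn_zero_of_abs_le {ι β : Type*} {l : Filter ι} {F : ι → β → ℝ}
    {s : Set β} {u : ι → ℝ} (hu : Tendsto u l (nhds 0)) (hF : ∀ᶠ n in l, ∀ x ∈ s, |F n x| ≤ u n) :
    TendstoUniformlyOn F (fun _ => 0) l s := by
  rw [Metric.tendstoUniformlyOn_iff]
  intro ε hε
  filter_upwards [hF, hu.eventually (gt_mem_nhds hε)] with n hn hlt x hx
  rw [dist_zero_left, Real.norm_eq_abs]
  exact (hn x hx).trans_lt hlt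

theorem moran_dual_lindeberg_limit_general
    (δ : ℝ) (hδ : 0 < δ) (σ : ℕ → ℝ)
    (hσ1 : ∀ N, σ N > -1) (hσ2 : ∀ N, σ N ≠ 0)
    (i : ℕ → ℕ) (hi1 : ∀ N, 1 ≤ i N) (hi2 : ∀ N, i N ≤ N) :
    Tendsto (fun N : ℕ => (N : ℝ) ^ 2 *
        ∑ j ∈ Finset.range (N + 1),
          moranQ N (σ N) (i N) j * |(j : ℝ) / N - (i N : ℝ) / N| ^ (2 + δ))
      atTop (nhds 0)
    ∧ TendstoUniformlyOn
        (fun (N : ℕ) (y : ℝ) => (N : ℝ) ^ 2 *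
          ∑ j ∈ Finset.range (N + 1),
            moranQ N (σ N) (min (⌊(N : ℝ) * y⌋₊ + 1) N) j *
              |(j : ℝ) / N - ((min (⌊(N : ℝ) * y⌋₊ + 1) N : ℕ) : ℝ) / N| ^ (2 + δ))
        (fun _ => 0) atTop (Set.Icc 0 1) := by
  have hbound : ∀ N k : ℕ, 1 ≤ k → k ≤ N →
      |(N : ℝ) ^ 2 * ∑ j ∈ range (N + 1),
        moranQ N (σ N) k j * |(j : ℝ) / N - (k : ℝ) / N| ^ (2 + δ)| ≤ (N : ℝ) ^ (-δ) :=
    fun N k hk hkN => abs_scaled_moranQ_moment_le (hσ1 N) (hσ2 N) hk hkN (by linarith)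
  have hdecay : Tendsto (fun N : ℕ => (N : ℝ) ^ (-δ)) atTop (nhds 0) :=
    (tendsto_rpow_neg_atTop hδ).comp tendsto_natCast_atTop_atTop
  refine ⟨squeeze_zero_norm (fun N => hbound N (i N) (hi1 N) (hi2 N)) hdecay,
    tendstoUniformlyOn_zero_of_abs_le hdecay ?_⟩
  filter_upwards [eventually_ge_atTop 1] with N hN y _
  exact hbound N _ (le_min (Nat.succ_pos _) hN) (min_le_right _ _)

/-- Lindeberg condition for the dual chain: the scaled `(2+δ)`-moment of
the dual Moran chain increment converges to `0`, uniformly in `x` when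
`i_N = min(⌊Nx⌋+1, N)`. -/
theorem moran_dual_lindeberg_limit
    (γ : ℝ) (hγ : γ ≠ 0) (δ : ℝ) (hδ : 0 < δ) (σ : ℕ → ℝ)
    (hσ1 : ∀ N, σ N > -1) (hσ2 : ∀ N, σ N ≠ 0)
    (hσγ : Tendsto (fun N : ℕ => (N : ℝ) * σ N) atTop (nhds γ))
    (i : ℕ → ℕ) (hi1 : ∀ N, 1 ≤ i N) (hi2 : ∀ N, i N ≤ N)
    (x : ℝ) (hx : x ∈ Set.Icc (0 : ℝ) 1)
    (hix : Tendsto (fun N : ℕ => (i N : ℝ) / N) atTop (nhds x)) :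
    Tendsto (fun N : ℕ => (N : ℝ) ^ 2 *
        ∑ j ∈ Finset.range (N + 1),
          moranQ N (σ N) (i N) j * |(j : ℝ) / N - (i N : ℝ) / N| ^ (2 + δ))
      atTop (nhds 0)
    ∧ TendstoUniformlyOn
        (fun (N : ℕ) (y : ℝ) => (N : ℝ) ^ 2 *
          ∑ j ∈ Finset.range (N + 1),
            moranQ N (σ N) (min (⌊(N : ℝ) * y⌋₊ + 1) N) j *
              |(j : ℝ) / N - ((min (⌊(N : ℝ) * y⌋₊ + 1) N : ℕ) : ℝ) / N| ^ (2 + δ))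
        (fun _ => 0) atTop (Set.Icc 0 1) :=
  moran_dual_lindeberg_limit_general δ hδ σ hσ1 hσ2 i hi1 hi2
end

section
/- Let γ be real, s(x) = ∫₀ˣ e^{−γu} du, m′(y) = e^{γy}/(y(1−y)) for 0 < y < 1, and g(x,y) = (s(1) − s(max(x,y)))·s(min(x,y))/s(1). Let (α_n)_{n≥1} be measurable functions [0,1] → ℝ and (λ_n)_{n≥1} positive reals such that, for every n, ∫₀¹ α_n(y)²·m′(y) dy = 1 and α_n(x) = λ_n·∫₀¹ g(x,y)·α_n(y)·m′(y) dy for all x ∈ [0,1], and such that Σ_{n=1}^{∞} 1/λ_n² < ∞. Then for every a > 0 the series p(t,x,y) = Σ_{n=1}^{∞} e^{−λ_n t}·α_n(x)·α_n(y) converges absolutely and uniformly on the set {(t,x,y) : t ≥ a, 0 ≤ x ≤ 1, 0 ≤ y ≤ 1}. -/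
/-!
By Cauchy–Schwarz (here in the cruder AM–GM form `2|k f| ≤ k² + f²`), the eigen-equation
gives `|α_n(x)| ≤ C λ_n` with `C = (B + 1)/2`, where `B` bounds `∫₀¹ g(x,y)² m′(y) dy`
uniformly in `x`: this holds because `g(x,y) = O(y(1−y))` cancels the singularity of `m′` at the
endpoints. Hence the `n`-th term is at most `C² λ_n² e^{−λ_n a} ≤ 24 C² a⁻⁴ λ_n⁻²` on
`{t ≥ a}`, and the Weierstrass M-test applies.
-/

open MeasureTheory

/-- The scale function `s(x) = ∫₀ˣ e^{−γu} du`. -/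
noncomputable def sFn (γ x : ℝ) : ℝ := ∫ u in (0 : ℝ)..x, Real.exp (-(γ * u))

/-- The speed density `m′(y) = e^{γy}/(y(1−y))`. -/
noncomputable def mDens (γ y : ℝ) : ℝ := Real.exp (γ * y) / (y * (1 - y))

/-- The Green function `g(x,y) = (s(1) − s(max x y)) s(min x y)/s(1)`. -/
noncomputable def gFn (γ x y : ℝ) : ℝ :=
  (sFn γ 1 - sFn γ (max x y)) * sFn γ (min x y) / sFn γ 1

open Set Real

lemma sq_div_le_of_le_mul {𝕜 : Type*} [Field 𝕜] [LinearOrder 𝕜] [IsStrictOrderedRing 𝕜]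
    {a b c : 𝕜} (ha : 0 ≤ a) (hb : 0 ≤ b) (h : a ≤ c * b) : a ^ 2 / b ≤ c ^ 2 * b := by
  rcases hb.eq_or_lt with rfl | hb
  · simp
  rw [div_le_iff₀ hb]
  calc a ^ 2 ≤ (c * b) ^ 2 := pow_le_pow_left₀ ha h 2
    _ = c ^ 2 * b * b := by ring

lemma abs_integral_mul_mul_le {α : Type*} [MeasurableSpace α] {μ : Measure α} {k f w : α → ℝ}
    (hw : 0 ≤ᵐ[μ] w) (hk : Integrable (fun y => k y ^ 2 * w y) μ)
    (hf : Integrable (fun y => f y ^ 2 * w y) μ) :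
    |∫ y, k y * f y * w y ∂μ| ≤ ((∫ y, k y ^ 2 * w y ∂μ) + ∫ y, f y ^ 2 * w y ∂μ) / 2 := by
  have hpointwise : ∀ᵐ y ∂μ, |k y * f y * w y| ≤ (k y ^ 2 * w y + f y ^ 2 * w y) / 2 := by
    filter_upwards [hw] with y (hy : 0 ≤ w y)
    rw [abs_mul, abs_mul, abs_of_nonneg hy]
    nlinarith [mul_le_mul_of_nonneg_right (two_mul_le_add_sq |k y| |f y|) hy,
      sq_abs (k y), sq_abs (f y)]
  calc |∫ y, k y * f y * w y ∂μ| ≤ ∫ y, |k y * f y * w y| ∂μ := abs_integral_le_integral_abs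
    _ ≤ ∫ y, (k y ^ 2 * w y + f y ^ 2 * w y) / 2 ∂μ :=
      integral_mono_of_nonneg (ae_of_all _ fun _ => abs_nonneg _) ((hk.add hf).div_const 2)
        hpointwise
    _ = _ := by rw [integral_div, integral_add hk hf]

lemma exp_mul_le_exp_abs (γ : ℝ) {u : ℝ} (hu : |u| ≤ 1) : exp (γ * u) ≤ exp |γ| := by
  apply exp_le_exp.2
  calc γ * u ≤ |γ * u| := le_abs_self _
    _ = |γ| * |u| := abs_mul _ _
    _ ≤ |γ| := mul_le_of_le_one_right (abs_nonneg _) hu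

lemma exp_neg_mul_mul_sq_le {l a : ℝ} (hl : 0 < l) (ha : 0 < a) :
    exp (-(l * a)) * l ^ 2 ≤ 24 / a ^ 4 * (1 / l ^ 2) := by
  have h := pow_div_factorial_le_exp _ (mul_nonneg hl.le ha.le) 4
  norm_num [Nat.factorial] at h
  rw [exp_neg, inv_mul_eq_div, div_le_iff₀ (exp_pos _)]
  calc l ^ 2 = 24 / a ^ 4 * (1 / l ^ 2) * ((l * a) ^ 4 / 24) := by field_simp
    _ ≤ 24 / a ^ 4 * (1 / l ^ 2) * exp (l * a) := by gcongr

lemma abs_exp_neg_mul_mul_mul_le {l a t u v C : ℝ} (hl : 0 < l) (ha : 0 < a) (ht : a ≤ t)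
    (hu : |u| ≤ C * l) (hv : |v| ≤ C * l) :
    |exp (-(l * t)) * u * v| ≤ C ^ 2 * (24 / a ^ 4) * (1 / l ^ 2) := by
  have hCl : 0 ≤ C * l := (abs_nonneg u).trans hu
  calc |exp (-(l * t)) * u * v| = exp (-(l * t)) * |u| * |v| := by
        rw [abs_mul, abs_mul, abs_of_pos (exp_pos _)]
    _ ≤ exp (-(l * a)) * (C * l) * (C * l) := by gcongr
    _ = C ^ 2 * (exp (-(l * a)) * l ^ 2) := by ring
    _ ≤ C ^ 2 * (24 / a ^ 4 * (1 / l ^ 2)) := 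
      mul_le_mul_of_nonneg_left (exp_neg_mul_mul_sq_le hl ha) (sq_nonneg C)
    _ = C ^ 2 * (24 / a ^ 4) * (1 / l ^ 2) := by ring

lemma continuous_exp_neg_mul (γ : ℝ) : Continuous fun u : ℝ => exp (-(γ * u)) := by fun_prop

lemma continuous_sFn (γ : ℝ) : Continuous (sFn γ) :=
  intervalIntegral.continuous_primitive
    (fun _ _ => (continuous_exp_neg_mul γ).intervalIntegrable _ _) 0

lemma sFn_sub_sFn (γ x y : ℝ) : sFn γ y - sFn γ x = ∫ u in x..y, exp (-(γ * u)) :=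
  intervalIntegral.integral_interval_sub_left ((continuous_exp_neg_mul γ).intervalIntegrable _ _)
    ((continuous_exp_neg_mul γ).intervalIntegrable _ _)

lemma sFn_zero (γ : ℝ) : sFn γ 0 = 0 := intervalIntegral.integral_same

lemma sFn_one_pos (γ : ℝ) : 0 < sFn γ 1 :=
  intervalIntegral.intervalIntegral_pos_of_pos_on
    ((continuous_exp_neg_mul γ).intervalIntegrable _ _) (fun _ _ => exp_pos _) zero_lt_one

lemma monotone_sFn (γ : ℝ) : Monotone (sFn γ) := fun x y hxy => by
  rw [← sub_nonneg, sFn_sub_sFn]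
  exact intervalIntegral.integral_nonneg hxy fun _ _ => (exp_pos _).le

lemma sFn_sub_sFn_le (γ : ℝ) {x y : ℝ} (hx : 0 ≤ x) (hxy : x ≤ y) (hy : y ≤ 1) :
    sFn γ y - sFn γ x ≤ exp |γ| * (y - x) := by
  rw [sFn_sub_sFn]
  calc ∫ u in x..y, exp (-(γ * u)) ≤ ∫ _ in x..y, exp |γ| := by
        refine intervalIntegral.integral_mono_on hxy
          ((continuous_exp_neg_mul γ).intervalIntegrable _ _) intervalIntegrable_const
          fun u hu => ?_
        rw [← mul_neg]
        exact exp_mul_le_exp_abs γ (abs_le.2 ⟨by linarith [hu.2], by linarith [hu.1]⟩)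
    _ = exp |γ| * (y - x) := by simp [mul_comm]

lemma continuous_gFn (γ x : ℝ) : Continuous (gFn γ x) := by
  have := continuous_sFn γ
  unfold gFn
  fun_prop

lemma gFn_nonneg (γ : ℝ) {x y : ℝ} (hx : x ∈ Icc (0 : ℝ) 1) (hy : y ∈ Icc (0 : ℝ) 1) :
    0 ≤ gFn γ x y :=
  div_nonneg (mul_nonneg (sub_nonneg.2 (monotone_sFn γ (max_le hx.2 hy.2)))
    (sFn_zero γ ▸ monotone_sFn γ (le_min hx.1 hy.1))) (sFn_one_pos γ).le

lemma gFn_le (γ : ℝ) {x y : ℝ} (hx : x ∈ Icc (0 : ℝ) 1) (hy : y ∈ Icc (0 : ℝ) 1) :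
    gFn γ x y ≤ exp |γ| ^ 2 / sFn γ 1 * (y * (1 - y)) := by
  have hmax : sFn γ 1 - sFn γ (max x y) ≤ exp |γ| * (1 - y) := by
    linarith [sFn_sub_sFn_le γ hy.1 hy.2 le_rfl, monotone_sFn γ (le_max_right x y)]
  have hmin : sFn γ (min x y) ≤ exp |γ| * y := by
    linarith [sFn_sub_sFn_le γ le_rfl hy.1 hy.2, monotone_sFn γ (min_le_right x y), sFn_zero γ]
  have hmin_nonneg : 0 ≤ sFn γ (min x y) := sFn_zero γ ▸ monotone_sFn γ (le_min hx.1 hy.1)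
  have h1y : 0 ≤ 1 - y := sub_nonneg.2 hy.2
  calc gFn γ x y ≤ exp |γ| * (1 - y) * (exp |γ| * y) / sFn γ 1 := by
        unfold gFn
        gcongr
        exact (sFn_one_pos γ).le
    _ = exp |γ| ^ 2 / sFn γ 1 * (y * (1 - y)) := by ring

lemma gFn_sq_mul_mDens_le (γ : ℝ) {x y : ℝ} (hx : x ∈ Icc (0 : ℝ) 1) (hy : y ∈ Icc (0 : ℝ) 1) :
    gFn γ x y ^ 2 * mDens γ y ≤ exp |γ| * (exp |γ| ^ 2 / sFn γ 1) ^ 2 := by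
  have hd : 0 ≤ y * (1 - y) := mul_nonneg hy.1 (sub_nonneg.2 hy.2)
  have hd1 : y * (1 - y) ≤ 1 := mul_le_one₀ hy.2 (sub_nonneg.2 hy.2) (by linarith [hy.1])
  calc gFn γ x y ^ 2 * mDens γ y = exp (γ * y) * (gFn γ x y ^ 2 / (y * (1 - y))) := by
        rw [mDens]; ring
    _ ≤ exp |γ| * ((exp |γ| ^ 2 / sFn γ 1) ^ 2 * (y * (1 - y))) :=
        mul_le_mul (exp_mul_le_exp_abs γ (abs_le.2 ⟨by linarith [hy.1], hy.2⟩))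
          (sq_div_le_of_le_mul (gFn_nonneg γ hx hy) hd (gFn_le γ hx hy))
          (div_nonneg (sq_nonneg _) hd) (exp_pos _).le
    _ ≤ exp |γ| * (exp |γ| ^ 2 / sFn γ 1) ^ 2 := by
        gcongr
        exact mul_le_of_le_one_right (sq_nonneg _) hd1

lemma exists_abs_eigenfunction_le (γ : ℝ) :
    ∃ C, ∀ (f : ℝ → ℝ) (l : ℝ), (∫ y in (0 : ℝ)..1, f y ^ 2 * mDens γ y) = 1 →
      ∀ x ∈ Icc (0 : ℝ) 1, f x = l * (∫ y in (0 : ℝ)..1, gFn γ x y * f y * mDens γ y) →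
        |f x| ≤ C * |l| := by
  set B := exp |γ| * (exp |γ| ^ 2 / sFn γ 1) ^ 2
  refine ⟨(B + 1) / 2, fun f l hnorm x hx heig => ?_⟩
  rw [intervalIntegral.integral_of_le zero_le_one] at hnorm heig
  have hIoc : ∀ y ∈ Ioc (0 : ℝ) 1, y ∈ Icc (0 : ℝ) 1 := fun _ hy => ⟨hy.1.le, hy.2⟩
  have hw : 0 ≤ᵐ[volume.restrict (Ioc (0 : ℝ) 1)] mDens γ := by
    filter_upwards [ae_restrict_mem measurableSet_Ioc] with y hy
    exact div_nonneg (exp_pos _).le (mul_nonneg hy.1.le (sub_nonneg.2 hy.2))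
  have hf : IntegrableOn (fun y => f y ^ 2 * mDens γ y) (Ioc 0 1) :=
    Integrable.of_integral_ne_zero (by rw [hnorm]; exact one_ne_zero)
  have hk : IntegrableOn (fun y => gFn γ x y ^ 2 * mDens γ y) (Ioc 0 1) := by
    refine Measure.integrableOn_of_bounded measure_Ioc_lt_top.ne
      (((continuous_gFn γ x).measurable.pow_const 2).mul
        (by unfold mDens; fun_prop : Measurable (mDens γ))).aestronglyMeasurable (M := B) ?_
    filter_upwards [ae_restrict_mem measurableSet_Ioc, hw] with y hy (hwy : 0 ≤ mDens γ y)
    rw [norm_of_nonneg (mul_nonneg (sq_nonneg _) hwy)]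
    exact gFn_sq_mul_mDens_le γ hx (hIoc y hy)
  have hkB : ∫ y in Ioc (0 : ℝ) 1, gFn γ x y ^ 2 * mDens γ y ≤ B := by
    calc _ ≤ ∫ _ in Ioc (0 : ℝ) 1, B :=
          setIntegral_mono_on hk (integrableOn_const measure_Ioc_lt_top.ne) measurableSet_Ioc
            fun y hy => gFn_sq_mul_mDens_le γ hx (hIoc y hy)
      _ = B := by simp
  rw [heig, abs_mul, mul_comm]
  gcongr
  calc _ ≤ _ := abs_integral_mul_mul_le hw hk hf
    _ ≤ (B + 1) / 2 := by rw [hnorm]; linarith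

open Filter

theorem transition_density_series_uniform_convergence_general
    (γ : ℝ) (α : ℕ → ℝ → ℝ) (lam : ℕ → ℝ)
    (hpos : ∀ n, 0 < lam n)
    (hnorm : ∀ n, (∫ y in (0 : ℝ)..1, α n y ^ 2 * mDens γ y) = 1)
    (heig : ∀ n, ∀ x ∈ Set.Icc (0 : ℝ) 1,
      α n x = lam n * ∫ y in (0 : ℝ)..1, gFn γ x y * α n y * mDens γ y)
    (hsum : Summable (fun n => 1 / lam n ^ 2)) :
    ∀ a > (0 : ℝ),
      (∀ t ≥ a, ∀ x ∈ Set.Icc (0 : ℝ) 1, ∀ y ∈ Set.Icc (0 : ℝ) 1,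
        Summable (fun n => |Real.exp (-(lam n * t)) * α n x * α n y|))
      ∧ TendstoUniformlyOn
          (fun (M : ℕ) (p : ℝ × ℝ × ℝ) =>
            ∑ n ∈ Finset.range M,
              Real.exp (-(lam n * p.1)) * α n p.2.1 * α n p.2.2)
          (fun p => ∑' n, Real.exp (-(lam n * p.1)) * α n p.2.1 * α n p.2.2)
          atTop
          {p : ℝ × ℝ × ℝ | a ≤ p.1 ∧ p.2.1 ∈ Set.Icc 0 1 ∧ p.2.2 ∈ Set.Icc 0 1} := by
  obtain ⟨C, hC⟩ := exists_abs_eigenfunction_le γ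
  have hα : ∀ n, ∀ x ∈ Icc (0 : ℝ) 1, |α n x| ≤ C * lam n := fun n x hx => by
    simpa only [abs_of_pos (hpos n)] using hC (α n) (lam n) (hnorm n) x hx (heig n x hx)
  intro a ha
  have hM : Summable fun n => C ^ 2 * (24 / a ^ 4) * (1 / lam n ^ 2) := hsum.mul_left _
  have hbound : ∀ n, ∀ p ∈ {p : ℝ × ℝ × ℝ | a ≤ p.1 ∧ p.2.1 ∈ Icc 0 1 ∧ p.2.2 ∈ Icc 0 1},
      ‖exp (-(lam n * p.1)) * α n p.2.1 * α n p.2.2‖ ≤ C ^ 2 * (24 / a ^ 4) * (1 / lam n ^ 2) := by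
    rintro n ⟨t, x, y⟩ ⟨ht, hx, hy⟩
    exact abs_exp_neg_mul_mul_mul_le (hpos n) ha ht (hα n x hx) (hα n y hy)
  exact ⟨fun t ht x hx y hy => hM.of_nonneg_of_le (fun _ => abs_nonneg _)
    fun n => hbound n (t, x, y) ⟨ht, hx, hy⟩, tendstoUniformlyOn_tsum_nat hM hbound⟩

/-- given normalized eigenfunction–eigenvalue pairs `(α_n, λ_n)` of the
Green operator with `Σ 1/λ_n² < ∞`, the series
`p(t,x,y) = Σ_n e^{−λ_n t} α_n(x) α_n(y)` converges absolutely and uniformly on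
`{t ≥ a} × [0,1] × [0,1]` for every `a > 0`. -/
theorem transition_density_series_uniform_convergence
    (γ : ℝ) (α : ℕ → ℝ → ℝ) (lam : ℕ → ℝ)
    (hmeas : ∀ n, Measurable (α n)) (hpos : ∀ n, 0 < lam n)
    (hnorm : ∀ n, (∫ y in (0 : ℝ)..1, α n y ^ 2 * mDens γ y) = 1)
    (heig : ∀ n, ∀ x ∈ Set.Icc (0 : ℝ) 1,
      α n x = lam n * ∫ y in (0 : ℝ)..1, gFn γ x y * α n y * mDens γ y)
    (hsum : Summable (fun n => 1 / lam n ^ 2)) :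
    ∀ a > (0 : ℝ),
      (∀ t ≥ a, ∀ x ∈ Set.Icc (0 : ℝ) 1, ∀ y ∈ Set.Icc (0 : ℝ) 1,
        Summable (fun n => |Real.exp (-(lam n * t)) * α n x * α n y|))
      ∧ TendstoUniformlyOn
          (fun (M : ℕ) (p : ℝ × ℝ × ℝ) =>
            ∑ n ∈ Finset.range M,
              Real.exp (-(lam n * p.1)) * α n p.2.1 * α n p.2.2)
          (fun p => ∑' n, Real.exp (-(lam n * p.1)) * α n p.2.1 * α n p.2.2)
          atTop
          {p : ℝ × ℝ × ℝ | a ≤ p.1 ∧ p.2.1 ∈ Set.Icc 0 1 ∧ p.2.2 ∈ Set.Icc 0 1} :=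
  transition_density_series_uniform_convergence_general γ α lam hpos hnorm heig hsum
end
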